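/- arXiv:2211.02685 — 3 statements merged into one kernel-verified Lean document; each statement's English description precedes it below -/
import Mathlib

section
/- Let f : ℕ → ℝ be a bounded function on the positive integers satisfying (i) f(n·k) ≥ f(n) for all positive integers n, k, and (ii) f(n+k) ≥ (n/(n+k))·f(n) + (k/(n+k))·f(k) for all positive integers n, k. Then the limit of f(n) as n → ∞ exists and equals the supremum of f over the positive integers. -/
/-- A bounded weakly-increasing function `f : ℕ → ℝ` (on the positive integers)
converges as `n → ∞` to its supremum over the positive integers. -/
theorem weakly_increasing_tendsto_sSup (f : ℕ → ℝ) (C : ℝ)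
    (hbd : ∀ n : ℕ, 0 < n → |f n| ≤ C)
    (h1 : ∀ n k : ℕ, 0 < n → 0 < k → f n ≤ f (n * k))
    (h2 : ∀ n k : ℕ, 0 < n → 0 < k →
      ((n : ℝ) / (n + k)) * f n + ((k : ℝ) / (n + k)) * f k ≤ f (n + k)) :
    Filter.Tendsto f Filter.atTop
      (nhds (sSup {y : ℝ | ∃ n : ℕ, 0 < n ∧ f n = y})) := by
  set T : Set ℝ := {y : ℝ | ∃ n : ℕ, 0 < n ∧ f n = y} with hT
  have hC0 : 0 ≤ C := le_trans (abs_nonneg _) (hbd 1 one_pos)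
  have hTne : T.Nonempty := ⟨f 1, 1, one_pos, rfl⟩
  have hTbdd : BddAbove T := ⟨C, by rintro y ⟨n, hn, rfl⟩; exact (abs_le.mp (hbd n hn)).2⟩
  set L := sSup T with hL
  have hfle : ∀ n, 0 < n → f n ≤ L := fun n hn => le_csSup hTbdd ⟨n, hn, rfl⟩
  rw [Metric.tendsto_atTop]
  intro ε hε
  obtain ⟨y, ⟨m, hm, rfl⟩, hy⟩ := exists_lt_of_lt_csSup hTne
    (show L - ε/2 < L by linarith)
  -- key estimate : for n ≥ 2m, f n ≥ f m - 2*C*m/n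
  have key : ∀ n : ℕ, 2*m ≤ n → f m - 2*C*(m:ℝ)/(n:ℝ) ≤ f n := by
    intro n hn
    have hnpos : 0 < n := lt_of_lt_of_le (by omega) hn
    set q := (n-1)/m with hq
    set r := (n-1) % m + 1 with hr
    have hr1 : 1 ≤ r := Nat.le_add_left 1 _
    have hrm : r ≤ m := Nat.succ_le_of_lt (Nat.mod_lt _ hm)
    have hmd := Nat.mod_add_div (n-1) m
    have hnat : q * m + r = n := by
      have h' : (n-1) % m + m * ((n-1)/m) = n - 1 := hmd
      have h'' : q * m = m * ((n-1)/m) := Nat.mul_comm _ _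
      omega
    have hq1 : 1 ≤ q := by
      rw [hq, Nat.le_div_iff_mul_le hm]; omega
    have hqm : 0 < q * m := Nat.mul_pos hq1 hm
    have step := h2 (q*m) r hqm hr1
    have hcast : ((q*m : ℕ):ℝ) + (r:ℝ) = (n:ℝ) := by exact_mod_cast congrArg (Nat.cast (R := ℝ)) hnat
    rw [hnat, hcast] at step
    have hfm : f m ≤ f (q*m) := by
      have := h1 m q hm hq1
      rwa [Nat.mul_comm] at this
    have hfr := abs_le.mp (hbd r hr1)
    have hfmb := abs_le.mp (hbd m hm)
    have hn' : (0:ℝ) < n := by exact_mod_cast hnpos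
    have hr0 : (0:ℝ) ≤ (r:ℝ) := Nat.cast_nonneg r
    have hqm0 : (0:ℝ) ≤ ((q*m:ℕ):ℝ) := Nat.cast_nonneg _
    have hrmR : (r:ℝ) ≤ (m:ℝ) := Nat.cast_le.mpr hrm
    have h3 : f m * n - 2*C*(m:ℝ) ≤ ((q*m:ℕ):ℝ) * f (q*m) + (r:ℝ) * f r := by
      nlinarith [mul_nonneg hqm0 (sub_nonneg.2 hfm),
        mul_nonneg hr0 (by linarith [hfr.1] : (0:ℝ) ≤ f r + C),
        mul_nonneg hr0 (by linarith [hfmb.2] : (0:ℝ) ≤ C - f m),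
        mul_nonneg (by linarith : (0:ℝ) ≤ (m:ℝ) - r) hC0]
    calc f m - 2*C*(m:ℝ)/(n:ℝ) = (f m * n - 2*C*(m:ℝ))/n := by field_simp
      _ ≤ (((q*m:ℕ):ℝ) * f (q*m) + (r:ℝ) * f r)/n := by gcongr
      _ = ((q*m:ℕ):ℝ)/n * f (q*m) + (r:ℝ)/n * f r := by ring
      _ ≤ f n := step
  obtain ⟨N₁, hN₁⟩ := exists_nat_ge (4*C*(m:ℝ)/ε)
  refine ⟨max (2*m) N₁, fun n hn => ?_⟩
  have hn2m : 2*m ≤ n := le_trans (le_max_left _ _) hn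
  have hnN₁ : N₁ ≤ n := le_trans (le_max_right _ _) hn
  have hnpos : 0 < n := lt_of_lt_of_le (by omega) hn2m
  have hn' : (0:ℝ) < n := by exact_mod_cast hnpos
  have h4 : 4*C*(m:ℝ)/ε ≤ (n:ℝ) := le_trans hN₁ (Nat.cast_le.mpr hnN₁)
  have h5 : 2*C*(m:ℝ)/(n:ℝ) ≤ ε/2 := by
    rw [div_le_iff₀ hn']
    rw [div_le_iff₀ hε] at h4
    nlinarith
  have h6 := key n hn2m
  have h7 := hfle n hnpos
  rw [Real.dist_eq, abs_lt]
  constructor <;> linarith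
end

section
/- For the qubit dephasing channel Δ_κ applied to the pure state |ψ_E⟩ = √(1−E)|0⟩ + √E|1⟩ (0 ≤ E ≤ 1), the output ℰ(Δ_κ(|ψ_E⟩⟨ψ_E|); H), with H = |1⟩⟨1|, equals E − (1/2)(1 − √(1 − 4κE(1−E))). -/
open Matrix BigOperators

/-- Mean energy `Tr[ρH]` (real part). -/
noncomputable def energy {ι : Type*} [Fintype ι] (ρ H : Matrix ι ι ℂ) : ℝ :=
  (Matrix.trace (ρ * H)).re

/-- Minimum of `Tr[UρU†H]` over all unitaries `U`. -/
noncomputable def minEnergy {ι : Type*} [Fintype ι] [DecidableEq ι]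
    (ρ H : Matrix ι ι ℂ) : ℝ :=
  sInf {x | ∃ U ∈ Matrix.unitaryGroup ι ℂ, x = energy (U * ρ * star U) H}

/-- Ergotropy `ℰ(ρ;H) = Tr[ρH] − min_U Tr[UρU†H]`. -/
noncomputable def ergotropy {ι : Type*} [Fintype ι] [DecidableEq ι]
    (ρ H : Matrix ι ι ℂ) : ℝ :=
  energy ρ H - minEnergy ρ H

/-- The qubit dephasing channel `Δ_κ`: fixes diagonal entries in the energy
eigenbasis and multiplies off-diagonal entries by `√(1−κ)`. -/
noncomputable def deph (κ : ℝ) (M : Matrix (Fin 2) (Fin 2) ℂ) :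
    Matrix (Fin 2) (Fin 2) ℂ :=
  Matrix.of fun i j => if i = j then M i j else ((Real.sqrt (1 - κ) : ℝ) : ℂ) * M i j

/-- The qubit Hamiltonian `H = |1⟩⟨1|` (ground energy 0, excited energy 1). -/
noncomputable def qubitH : Matrix (Fin 2) (Fin 2) ℂ :=
  Matrix.diagonal fun i : Fin 2 => if (i : ℕ) = 0 then (0 : ℂ) else 1

/-- The density matrix of `|ψ_E⟩ = √(1−E)|0⟩ + √E|1⟩`. -/
noncomputable def psiRho (E : ℝ) : Matrix (Fin 2) (Fin 2) ℂ :=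
  Matrix.of fun i j =>
    (fun k : Fin 2 => if (k : ℕ) = 0 then ((Real.sqrt (1 - E) : ℝ) : ℂ)
      else ((Real.sqrt E : ℝ) : ℂ)) i
    * star ((fun k : Fin 2 => if (k : ℕ) = 0 then ((Real.sqrt (1 - E) : ℝ) : ℂ)
      else ((Real.sqrt E : ℝ) : ℂ)) j)

lemma energy_apply (M : Matrix (Fin 2) (Fin 2) ℂ) : energy M qubitH = (M 1 1).re := by
  simp [energy, qubitH, Matrix.trace, Matrix.diag, Matrix.mul_apply, Fin.sum_univ_two,
    Matrix.diagonal]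

lemma rot_unitary (x y : ℝ) (hxy : x^2 + y^2 = 1) :
    (Matrix.of ![![-(y:ℂ), (x:ℂ)], ![(x:ℂ), (y:ℂ)]]) ∈ Matrix.unitaryGroup (Fin 2) ℂ := by
  rw [Matrix.mem_unitaryGroup_iff]
  ext i j
  have h : ((x:ℂ))^2 + (y:ℂ)^2 = 1 := by exact_mod_cast congrArg (fun t : ℝ => (t : ℂ)) hxy
  fin_cases i <;> fin_cases j <;>
    simp [Matrix.mul_apply, Fin.sum_univ_two, Matrix.star_apply, Complex.star_def,
      Matrix.one_apply, ← Complex.ofReal_pow] <;>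
  first
  | linear_combination h
  | ring

lemma rot_energy (ρ : Matrix (Fin 2) (Fin 2) ℂ) (a b c x y : ℝ)
    (h00 : ρ 0 0 = (a : ℂ)) (h01 : ρ 0 1 = (c : ℂ)) (h10 : ρ 1 0 = (c : ℂ))
    (h11 : ρ 1 1 = (b : ℂ)) :
    energy ((Matrix.of ![![-(y:ℂ), (x:ℂ)], ![(x:ℂ), (y:ℂ)]]) * ρ *
      star (Matrix.of ![![-(y:ℂ), (x:ℂ)], ![(x:ℂ), (y:ℂ)]])) qubitH
      = a * x^2 + 2*c*x*y + b * y^2 := by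
  rw [energy_apply]
  have key : ((Matrix.of ![![-(y:ℂ), (x:ℂ)], ![(x:ℂ), (y:ℂ)]]) * ρ *
      star (Matrix.of ![![-(y:ℂ), (x:ℂ)], ![(x:ℂ), (y:ℂ)]])) 1 1
      = ((a * x^2 + 2*c*x*y + b * y^2 : ℝ) : ℂ) := by
    simp [Matrix.mul_apply, Fin.sum_univ_two, Matrix.star_apply, Complex.star_def,
      Matrix.vecMul, dotProduct, h00, h01, h10, h11]
    push_cast
    ring
  rw [key, Complex.ofReal_re]

lemma lower_bound (ρ : Matrix (Fin 2) (Fin 2) ℂ) (a b c lam : ℝ) (hc : 0 ≤ c)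
    (ha : lam ≤ a) (hb : lam ≤ b) (heig : (a - lam) * (b - lam) = c ^ 2)
    (h00 : ρ 0 0 = (a : ℂ)) (h01 : ρ 0 1 = (c : ℂ)) (h10 : ρ 1 0 = (c : ℂ))
    (h11 : ρ 1 1 = (b : ℂ)) (U : Matrix (Fin 2) (Fin 2) ℂ)
    (hU : U ∈ Matrix.unitaryGroup (Fin 2) ℂ) :
    lam ≤ energy (U * ρ * star U) qubitH := by
  rw [Matrix.mem_unitaryGroup_iff] at hU
  have hrow : (U * star U) 1 1 = 1 := by rw [hU]; simp
  rw [energy_apply]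
  simp only [Matrix.mul_apply, Fin.sum_univ_two, Matrix.star_apply, Complex.star_def] at hrow ⊢
  rw [h00, h01, h10, h11]
  set u := U 1 0 with hu
  set v := U 1 1 with hv
  have hnorm : u.re ^ 2 + u.im ^ 2 + (v.re ^ 2 + v.im ^ 2) = 1 := by
    have := hrow
    simp [Complex.ext_iff, Complex.mul_re, Complex.mul_im] at this
    nlinarith [this.1]
  simp only [Complex.add_re, Complex.add_im, Complex.mul_re, Complex.mul_im, Complex.conj_re,
    Complex.conj_im, Complex.ofReal_re, Complex.ofReal_im]
  ring_nf
  set P := (a - lam) * (u.re^2 + u.im^2) + (b - lam) * (v.re^2 + v.im^2)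
      + 2*c*(u.re*v.re + u.im*v.im) with hPdef
  have hKP : (a - lam) * P = ((a-lam)*u.re + c*v.re)^2 + ((a-lam)*u.im + c*v.im)^2 := by
    rw [hPdef]; linear_combination (v.re^2 + v.im^2) * heig
  have hP : 0 ≤ P := by
    rcases lt_or_eq_of_le ha with hK' | hK'
    · nlinarith [hKP, sq_nonneg ((a-lam)*u.re + c*v.re), sq_nonneg ((a-lam)*u.im + c*v.im)]
    · have hc0 : c = 0 := by nlinarith
      rw [hPdef, hc0, ← hK']
      nlinarith [sq_nonneg v.re, sq_nonneg v.im]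
  have hlam : lam * (u.re^2 + u.im^2 + (v.re^2 + v.im^2)) = lam := by rw [hnorm, mul_one]
  have hP' : 0 ≤ (a - lam) * (u.re^2 + u.im^2) + (b - lam) * (v.re^2 + v.im^2)
      + 2*c*(u.re*v.re + u.im*v.im) := hPdef ▸ hP
  linarith [hP', hlam]

lemma minEnergy_eq (ρ : Matrix (Fin 2) (Fin 2) ℂ) (a b c lam : ℝ) (hc : 0 ≤ c)
    (ha : lam ≤ a) (hb : lam ≤ b) (heig : (a - lam) * (b - lam) = c ^ 2)
    (h00 : ρ 0 0 = (a : ℂ)) (h01 : ρ 0 1 = (c : ℂ)) (h10 : ρ 1 0 = (c : ℂ))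
    (h11 : ρ 1 1 = (b : ℂ)) :
    minEnergy ρ qubitH = lam := by
  have hmem : lam ∈ {x | ∃ U ∈ Matrix.unitaryGroup (Fin 2) ℂ,
      x = energy (U * ρ * star U) qubitH} := by
    set N := Real.sqrt (c^2 + (lam - a)^2) with hN
    by_cases hN0 : N = 0
    · -- then c = 0 and lam = a; use swap (x=1, y=0)
      have h2 : c^2 + (lam - a)^2 = 0 := by
        have := Real.sqrt_eq_zero'.mp hN0
        nlinarith [sq_nonneg c, sq_nonneg (lam - a)]
      have hc0 : c = 0 := by nlinarith [sq_nonneg c, sq_nonneg (lam - a)]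
      have hla : lam = a := by nlinarith [sq_nonneg c, sq_nonneg (lam - a)]
      refine ⟨_, rot_unitary 1 0 (by norm_num), ?_⟩
      rw [rot_energy ρ a b c 1 0 h00 h01 h10 h11]
      rw [hla]; ring
    · have hNpos : 0 < N := lt_of_le_of_ne (Real.sqrt_nonneg _) (Ne.symm hN0)
      have hN2 : N^2 = c^2 + (lam - a)^2 := Real.sq_sqrt (by positivity)
      set x := c / N with hx
      set y := (lam - a) / N with hy
      have hxy : x^2 + y^2 = 1 := by
        rw [hx, hy]; field_simp; linarith [hN2]
      refine ⟨_, rot_unitary x y hxy, ?_⟩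
      rw [rot_energy ρ a b c x y h00 h01 h10 h11]
      have hnum : a*c^2 + 2*c^2*(lam-a) + b*(lam-a)^2 = lam * N^2 := by
        rw [hN2]; linear_combination (a - lam) * heig
      have : a*x^2 + 2*c*x*y + b*y^2 = (a*c^2 + 2*c^2*(lam-a) + b*(lam-a)^2)/N^2 := by
        rw [hx, hy]; field_simp
      rw [this, hnum, mul_div_assoc, div_self (by positivity), mul_one]
  refine le_antisymm (csInf_le ⟨lam, ?_⟩ hmem) (le_csInf ⟨lam, hmem⟩ ?_)
  · rintro x ⟨U, hU, rfl⟩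
    exact lower_bound ρ a b c lam hc ha hb heig h00 h01 h10 h11 U hU
  · rintro x ⟨U, hU, rfl⟩
    exact lower_bound ρ a b c lam hc ha hb heig h00 h01 h10 h11 U hU

/-- The output ergotropy of the dephasing channel on `|ψ_E⟩⟨ψ_E|` equals
`E − (1/2)(1 − √(1 − 4κE(1−E)))`. -/
theorem dephasing_output_ergotropy (κ E : ℝ)
    (hκ : κ ∈ Set.Icc (0:ℝ) 1) (hE : E ∈ Set.Icc (0:ℝ) 1) :
    ergotropy (deph κ (psiRho E)) qubitH
      = E - (1/2) * (1 - Real.sqrt (1 - 4*κ*E*(1-E))) := by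
  obtain ⟨hκ0, hκ1⟩ := hκ
  obtain ⟨hE0, hE1⟩ := hE
  have hE1' : (0:ℝ) ≤ 1 - E := by linarith
  have hκ1' : (0:ℝ) ≤ 1 - κ := by linarith
  set c : ℝ := Real.sqrt (1 - κ) * (Real.sqrt (1 - E) * Real.sqrt E) with hcdef
  set s : ℝ := Real.sqrt (1 - 4*κ*E*(1-E)) with hsdef
  set lam : ℝ := (1 - s)/2 with hlamdef
  set ρ := deph κ (psiRho E) with hρ
  have h00 : ρ 0 0 = ((1 - E : ℝ) : ℂ) := by
    simp [hρ, deph, psiRho, Complex.star_def, Complex.conj_ofReal,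
      ← Complex.ofReal_mul, Real.mul_self_sqrt hE1']
  have h11 : ρ 1 1 = ((E : ℝ) : ℂ) := by
    simp [hρ, deph, psiRho, Complex.star_def, Complex.conj_ofReal,
      ← Complex.ofReal_mul, Real.mul_self_sqrt hE0]
  have h01 : ρ 0 1 = ((c : ℝ) : ℂ) := by
    show deph κ (psiRho E) 0 1 = _
    rw [deph, psiRho]
    simp [Complex.star_def, Complex.conj_ofReal, hcdef]
    all_goals exact Or.inl (by ring)
  have h10 : ρ 1 0 = ((c : ℝ) : ℂ) := by
    show deph κ (psiRho E) 1 0 = _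
    rw [deph, psiRho]
    simp [Complex.star_def, Complex.conj_ofReal, hcdef]
    all_goals exact Or.inl (by ring)
  have hc : 0 ≤ c := by rw [hcdef]; positivity
  have hD : 0 ≤ 1 - 4*κ*E*(1-E) := by
    nlinarith [mul_nonneg hE0 hE1', sq_nonneg (1 - 2*E), mul_nonneg (mul_nonneg hκ0 hE0) hE1']
  have hs2 : s^2 = 1 - 4*κ*E*(1-E) := Real.sq_sqrt hD
  have hs0 : 0 ≤ s := Real.sqrt_nonneg _
  have hslb : (1 - 2*E)^2 ≤ s^2 := by
    rw [hs2]; nlinarith [mul_nonneg hE0 hE1']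
  have ha : lam ≤ 1 - E := by
    rw [hlamdef]; nlinarith [hslb, hs0]
  have hb : lam ≤ E := by
    rw [hlamdef]; nlinarith [hslb, hs0]
  have hcsq : c^2 = (1-κ) * ((1-E) * E) := by
    rw [hcdef, mul_pow, mul_pow, Real.sq_sqrt hκ1', Real.sq_sqrt hE1', Real.sq_sqrt hE0]
  have heig : (1 - E - lam) * (E - lam) = c^2 := by
    rw [hlamdef]; linear_combination (1/4) * hs2 - hcsq
  have hmin : minEnergy ρ qubitH = lam :=
    minEnergy_eq ρ (1-E) E c lam hc ha hb heig h00 h01 h10 h11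
  rw [ergotropy, hmin, energy_apply, h11, Complex.ofReal_re, hlamdef]
  ring
end

section
/- For the d-dimensional depolarizing channel D_λ with λ ≥ 0, applied to a pure state |ψ⟩ with mean energy E = ⟨ψ|H|ψ⟩ where the Hamiltonian H has eigenvalues 0 = ε₁ ≤ ... ≤ ε_d = 1, the ergotropy of the output state equals λE. -/
/-!
Conjugation by a unitary fixes the identity, so for a state `ρ` every energy in the unitary
orbit of `D_λ(ρ)` is `λ` times the corresponding energy of `ρ` plus the constant
`(1 - λ) Tr H / d`. For `λ ≥ 0` both minima are attained at the same unitary, hence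
`ℰ(D_λ(ρ)) = λ ℰ(ρ)`. For a pure state the orbit energies `∑ εᵢ |(Uψ)ᵢ|²` are at least
`ε₁ = 0`, with equality for a unitary rotating `ψ` onto the ground state, so `ℰ(|ψ⟩⟨ψ|) = E`.
-/

open Matrix BigOperators

/-- The `d`-dimensional depolarizing channel `D_λ(ρ) = λρ + (1−λ)Tr[ρ]·(I/d)`. -/
noncomputable def depol (d : ℕ) (l : ℝ) (ρ : Matrix (Fin d) (Fin d) ℂ) :
    Matrix (Fin d) (Fin d) ℂ :=
  (l : ℂ) • ρ + (((1 - l) / d : ℝ) : ℂ) • Matrix.trace ρ • (1 : Matrix (Fin d) (Fin d) ℂ)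

/-- The rank-one projector `|ψ⟩⟨ψ|` onto a pure state `ψ`. -/
noncomputable def pureProj (d : ℕ) (ψ : Fin d → ℂ) : Matrix (Fin d) (Fin d) ℂ :=
  Matrix.of fun i j => ψ i * star (ψ j)

open scoped ComplexOrder

section

variable {ι : Type*} [Fintype ι] [DecidableEq ι]

lemma energy_diagonal (X : Matrix ι ι ℂ) (eps : ι → ℝ) :
    energy X (diagonal fun i => (eps i : ℂ)) = ∑ i, eps i * (X i i).re := by
  simp only [energy, trace, diag_apply, mul_diagonal, Complex.re_sum]
  refine Finset.sum_congr rfl fun i _ => ?_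
  simp [mul_comm]

lemma mul_trace_le_energy_diagonal {X : Matrix ι ι ℂ} (hX : X.PosSemidef) {eps : ι → ℝ}
    {i₀ : ι} (hmin : ∀ i, eps i₀ ≤ eps i) :
    eps i₀ * (trace X).re ≤ energy X (diagonal fun i => (eps i : ℂ)) := by
  rw [energy_diagonal, trace, Complex.re_sum, Finset.mul_sum]
  exact Finset.sum_le_sum fun i _ =>
    mul_le_mul_of_nonneg_right (hmin i) (Complex.nonneg_iff.mp hX.diag_nonneg).1

def orbitEnergies (ρ H : Matrix ι ι ℂ) : Set ℝ :=
  {x | ∃ U ∈ unitaryGroup ι ℂ, x = energy (U * ρ * star U) H}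

lemma ergotropy_eq_of_isLeast {ρ H : Matrix ι ι ℂ} {m : ℝ} (h : IsLeast (orbitEnergies ρ H) m) :
    ergotropy ρ H = energy ρ H - m := by
  rw [ergotropy, minEnergy, ← h.csInf_eq, orbitEnergies]

lemma lowerBounds_orbitEnergies_diagonal {ρ : Matrix ι ι ℂ} (hρ : ρ.PosSemidef)
    (htr : trace ρ = 1) {eps : ι → ℝ} {i₀ : ι} (hmin : ∀ i, eps i₀ ≤ eps i) :
    eps i₀ ∈ lowerBounds (orbitEnergies ρ (diagonal fun i => (eps i : ℂ))) := by
  rintro _ ⟨U, hU, rfl⟩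
  have htrU : trace (U * ρ * star U) = 1 := by
    rw [trace_mul_cycle, mem_unitaryGroup_iff'.mp hU, one_mul, htr]
  have := mul_trace_le_energy_diagonal (hρ.mul_mul_conjTranspose_same U) hmin
  rwa [← star_eq_conjTranspose, htrU, Complex.one_re, mul_one] at this

lemma exists_mem_unitaryGroup_mulVec_single {ψ : ι → ℂ} (hψ : star ψ ⬝ᵥ ψ = 1) (i₀ : ι) :
    ∃ V ∈ unitaryGroup ι ℂ, V *ᵥ Pi.single i₀ 1 = ψ := by
  have hunit : Orthonormal ℂ (({i₀} : Set ι).domRestrict fun _ => WithLp.toLp 2 ψ) := by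
    rw [orthonormal_iff_ite]
    rintro ⟨i, rfl⟩ ⟨j, rfl⟩
    simp only [Set.domRestrict_apply, EuclideanSpace.inner_toLp_toLp, dotProduct_comm ψ, hψ]
    simp
  obtain ⟨b, hb⟩ := hunit.exists_orthonormalBasis_extension_of_card_eq (by simp)
  refine ⟨_, (EuclideanSpace.basisFun ι ℂ).toMatrix_orthonormalBasis_mem_unitary b, ?_⟩
  ext i
  simp [Module.Basis.toMatrix_apply, hb i₀ rfl]

lemma energy_mul_depol_mul_star {d : ℕ} (l : ℝ) {ρ : Matrix (Fin d) (Fin d) ℂ}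
    (htr : trace ρ = 1) (H : Matrix (Fin d) (Fin d) ℂ) {U : Matrix (Fin d) (Fin d) ℂ}
    (hU : U ∈ unitaryGroup (Fin d) ℂ) :
    energy (U * depol d l ρ * star U) H
      = l * energy (U * ρ * star U) H + (1 - l) / d * (trace H).re := by
  have hconj : U * depol d l ρ * star U
      = (l : ℂ) • (U * ρ * star U) + (((1 - l) / d : ℝ) : ℂ) • 1 := by
    simp [depol, htr, Matrix.mul_add, Matrix.add_mul, mem_unitaryGroup_iff.mp hU]
  simp [hconj, energy, Matrix.add_mul, trace_add]

lemma isLeast_orbitEnergies_depol {d : ℕ} {l : ℝ} (hl : 0 ≤ l) {ρ H : Matrix (Fin d) (Fin d) ℂ}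
    (htr : trace ρ = 1) {m : ℝ} (h : IsLeast (orbitEnergies ρ H) m) :
    IsLeast (orbitEnergies (depol d l ρ) H) (l * m + (1 - l) / d * (trace H).re) := by
  obtain ⟨⟨U, hU, rfl⟩, hlow⟩ := h
  refine ⟨⟨U, hU, (energy_mul_depol_mul_star l htr H hU).symm⟩, ?_⟩
  rintro _ ⟨V, hV, rfl⟩
  rw [energy_mul_depol_mul_star l htr H hV]
  gcongr
  exact hlow ⟨V, hV, rfl⟩

lemma ergotropy_depol {d : ℕ} {l : ℝ} (hl : 0 ≤ l) {ρ H : Matrix (Fin d) (Fin d) ℂ}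
    (htr : trace ρ = 1) {m : ℝ} (h : IsLeast (orbitEnergies ρ H) m) :
    ergotropy (depol d l ρ) H = l * ergotropy ρ H := by
  have henergy := energy_mul_depol_mul_star l htr H (one_mem (unitaryGroup (Fin d) ℂ))
  simp only [one_mul, star_one, mul_one] at henergy
  rw [ergotropy_eq_of_isLeast (isLeast_orbitEnergies_depol hl htr h), ergotropy_eq_of_isLeast h,
    henergy]
  ring

lemma pureProj_eq_vecMulVec (d : ℕ) (ψ : Fin d → ℂ) : pureProj d ψ = vecMulVec ψ (star ψ) := rfl

lemma mul_pureProj_mul_star {d : ℕ} (U : Matrix (Fin d) (Fin d) ℂ) (ψ : Fin d → ℂ) :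
    U * pureProj d ψ * star U = pureProj d (U *ᵥ ψ) := by
  rw [pureProj_eq_vecMulVec, pureProj_eq_vecMulVec, mul_vecMulVec, vecMulVec_mul, star_mulVec,
    star_eq_conjTranspose]

lemma trace_pureProj {d : ℕ} (ψ : Fin d → ℂ) : trace (pureProj d ψ) = star ψ ⬝ᵥ ψ := by
  rw [pureProj_eq_vecMulVec, trace_vecMulVec, dotProduct_comm]

lemma energy_pureProj_single_diagonal {d : ℕ} (eps : Fin d → ℝ) (i₀ : Fin d) :
    energy (pureProj d (Pi.single i₀ 1)) (diagonal fun i => (eps i : ℂ)) = eps i₀ := by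
  rw [energy_diagonal]
  simp [pureProj, Pi.single_apply, apply_ite Complex.re]

lemma isLeast_orbitEnergies_pureProj_diagonal {d : ℕ} {ψ : Fin d → ℂ} (hψ : star ψ ⬝ᵥ ψ = 1)
    {eps : Fin d → ℝ} {i₀ : Fin d} (hmin : ∀ i, eps i₀ ≤ eps i) :
    IsLeast (orbitEnergies (pureProj d ψ) (diagonal fun i => (eps i : ℂ))) (eps i₀) := by
  refine ⟨?_, lowerBounds_orbitEnergies_diagonal (posSemidef_vecMulVec_self_star ψ)
    (trace_pureProj ψ ▸ hψ) hmin⟩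
  obtain ⟨V, hV, hVψ⟩ := exists_mem_unitaryGroup_mulVec_single hψ i₀
  refine ⟨star V, Unitary.star_mem hV, ?_⟩
  rw [mul_pureProj_mul_star, ← hVψ, mulVec_mulVec, mem_unitaryGroup_iff'.mp hV,
    one_mulVec, energy_pureProj_single_diagonal]

theorem depolarizing_output_ergotropy_nonneg_general (d : ℕ) (hd : 0 < d) (l : ℝ)
    (hl0 : 0 ≤ l)
    (eps : Fin d → ℝ) (hmono : Monotone eps)
    (h0 : eps ⟨0, hd⟩ = 0)
    (ψ : Fin d → ℂ) (hψ : dotProduct (star ψ) ψ = 1) :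
    ergotropy (depol d l (pureProj d ψ)) (Matrix.diagonal fun i => (eps i : ℂ))
      = l * energy (pureProj d ψ) (Matrix.diagonal fun i => (eps i : ℂ)) := by
  have hground : IsLeast (orbitEnergies (pureProj d ψ) (diagonal fun i => (eps i : ℂ))) 0 :=
    h0 ▸ isLeast_orbitEnergies_pureProj_diagonal hψ fun i => hmono (Nat.zero_le i)
  rw [ergotropy_depol hl0 ((trace_pureProj ψ).trans hψ) hground, ergotropy_eq_of_isLeast hground,
    sub_zero]

/-- For the depolarizing channel with `λ ≥ 0` applied to a pure state of mean
energy `E` (Hamiltonian eigenvalues `0 = ε₁ ≤ ... ≤ ε_d = 1`), the output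
ergotropy equals `λE`. -/
theorem depolarizing_output_ergotropy_nonneg (d : ℕ) (hd : 0 < d) (l : ℝ)
    (hl0 : 0 ≤ l) (hl1 : l ≤ 1)
    (eps : Fin d → ℝ) (hmono : Monotone eps)
    (h0 : eps ⟨0, hd⟩ = 0) (h1 : eps ⟨d - 1, Nat.sub_lt hd Nat.one_pos⟩ = 1)
    (ψ : Fin d → ℂ) (hψ : dotProduct (star ψ) ψ = 1) :
    ergotropy (depol d l (pureProj d ψ)) (Matrix.diagonal fun i => (eps i : ℂ))
      = l * energy (pureProj d ψ) (Matrix.diagonal fun i => (eps i : ℂ)) :=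
  depolarizing_output_ergotropy_nonneg_general d hd l hl0 eps hmono h0 ψ hψ
end
end
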